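/- If a graph G of order at least 6 satisfies (|V(G)|+1)/3 ≤ Δ(G) < |V(G)|/2 and no component of G is K_{Δ(G)+1}, then the equitable chromatic threshold of G is at most min{r+s+t : G admits an [r,s,t]-coloring}. -/

import Mathlib

open Finset

variable {V : Type*}

/-- `P` is the set of color classes of an `[r,s,t]`-coloring of `G`:
a partition of the vertices into independent sets, with `r` classes of size 3,
`s` classes of size 2 and `t` singleton classes. -/
def IsRST [Fintype V] [DecidableEq V] (G : SimpleGraph V) (P : Finset (Finset V))
    (r s t : ℕ) : Prop :=
  (∀ v : V, ∃! A, A ∈ P ∧ v ∈ A) ∧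
  (∀ A ∈ P, ∀ u ∈ A, ∀ w ∈ A, ¬ G.Adj u w) ∧
  (P.filter (fun A => A.card = 3)).card = r ∧
  (P.filter (fun A => A.card = 2)).card = s ∧
  (P.filter (fun A => A.card = 1)).card = t ∧
  (∀ A ∈ P, A.card = 1 ∨ A.card = 2 ∨ A.card = 3)

/-- A maximal `[r,s,t]`-coloring: for any other `[r',s',t']`-coloring,
either `r > r'`, or `r = r'` and `s ≥ s'`. -/
def IsMaxRST [Fintype V] [DecidableEq V] (G : SimpleGraph V) (P : Finset (Finset V))
    (r s t : ℕ) : Prop :=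
  IsRST G P r s t ∧
  ∀ (P' : Finset (Finset V)) (r' s' t' : ℕ), IsRST G P' r' s' t' →
    r' < r ∨ (r' = r ∧ s' ≤ s)

/-- `eB G X Y` is the number of edges with one endpoint in `X` and the other in `Y`. -/
def eB [Fintype V] [DecidableEq V] (G : SimpleGraph V) [DecidableRel G.Adj]
    (X Y : Finset V) : ℕ :=
  ((X ×ˢ Y).filter fun p => G.Adj p.1 p.2).card

/-- `G` is equitably `k`-colorable: a proper `k`-coloring whose color classes
have sizes differing pairwise by at most 1. -/
def EqColorable [Fintype V] (G : SimpleGraph V) (k : ℕ) : Prop :=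
  ∃ C : V → Fin k, (∀ u v, G.Adj u v → C u ≠ C v) ∧
    ∀ i j : Fin k,
      (Finset.univ.filter fun v => C v = i).card ≤
        (Finset.univ.filter fun v => C v = j).card + 1

/-!
Color with the blocks of the given `[r,s,t]`-coloring, padded with empty classes, and among all
proper `k`-colorings whose classes have at most 3 vertices take one minimizing `∑ |class|²`.
Moving a vertex into a class without neighbours of it lowers this potential whenever the target
class is at least two smaller than the source, so in a minimizer every such move is blocked. If
the minimizer is not equitable, it therefore has no empty class, a 3-class containing some `x`
and a singleton class `{w}`. Every singleton is adjacent to `x`, and so is every vertex `b` of a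
2-class `{a, b}` whose partner `a` misses some singleton `w'`: moving `a` to `w'` keeps the
potential and makes `b` a singleton. For the remaining 2-class vertices the partner is adjacent
to `w`, and all 3-class vertices are adjacent to `w`. Hence `|V| ≤ 2Δ`, against `2Δ < |V|`.
-/

lemma SimpleGraph.card_add_card_le_maxDegree [Fintype V] [DecidableEq V] {G : SimpleGraph V}
    [DecidableRel G.Adj] {x : V} {s t : Finset V} (hst : Disjoint s t)
    (hs : ∀ v ∈ s, G.Adj x v) (ht : ∀ v ∈ t, G.Adj x v) : #s + #t ≤ G.maxDegree :=
  calc #s + #t = #(s ∪ t) := (card_union_of_disjoint hst).symm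
    _ ≤ #(G.neighborFinset x) := card_le_card fun v hv => (G.mem_neighborFinset x v).2 <| by
      rcases mem_union.1 hv with h | h
      exacts [hs v h, ht v h]
    _ ≤ G.maxDegree := (G.card_neighborFinset_eq_degree x).trans_le (G.degree_le_maxDegree x)

section Recoloring

variable [Fintype V] {k : ℕ}

def colorClass (g : V → Fin k) (c : Fin k) : Finset V := {v | g v = c}

def potential (g : V → Fin k) : ℕ := ∑ c, #(colorClass g c) ^ 2

def verticesInClassOfCard (g : V → Fin k) (m : ℕ) : Finset V := {v | #(colorClass g (g v)) = m}

@[simp]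
lemma mem_colorClass {g : V → Fin k} {c : Fin k} {v : V} : v ∈ colorClass g c ↔ g v = c := by
  simp [colorClass]

@[simp]
lemma mem_verticesInClassOfCard {g : V → Fin k} {m : ℕ} {v : V} :
    v ∈ verticesInClassOfCard g m ↔ #(colorClass g (g v)) = m := by
  simp [verticesInClassOfCard]

lemma card_colorClass_pos (g : V → Fin k) (v : V) : 0 < #(colorClass g (g v)) :=
  card_pos.2 ⟨v, mem_colorClass.2 rfl⟩

lemma eq_of_card_colorClass_eq_one {g : V → Fin k} {u v : V} (hu : #(colorClass g (g u)) = 1)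
    (huv : g v = g u) : v = u :=
  card_le_one.1 hu.le v (mem_colorClass.2 huv) u (mem_colorClass.2 rfl)

lemma disjoint_verticesInClassOfCard {g : V → Fin k} {m n : ℕ} (h : m ≠ n) :
    Disjoint (verticesInClassOfCard g m) (verticesInClassOfCard g n) :=
  disjoint_left.2 fun _ hm hn =>
    h ((mem_verticesInClassOfCard.1 hm).symm.trans (mem_verticesInClassOfCard.1 hn))

variable (G : SimpleGraph V)

/-- An `[r,s,t]`-coloring with `r + s + t ≤ k`, padded with empty classes. -/
def IsRSTColoring (g : V → Fin k) : Prop :=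
  (∀ u v, G.Adj u v → g u ≠ g v) ∧ ∀ c, #(colorClass g c) ≤ 3

def IsMinRSTColoring (g : V → Fin k) : Prop :=
  IsRSTColoring G g ∧ ∀ g' : V → Fin k, IsRSTColoring G g' → potential g ≤ potential g'

variable {G} {g : V → Fin k}

lemma IsRSTColoring.exists_isMinRSTColoring (hg : IsRSTColoring G g) :
    ∃ g' : V → Fin k, IsMinRSTColoring G g' := by
  obtain ⟨g', hg', hmin⟩ := (measure potential).wf.has_min {g | IsRSTColoring G g} ⟨g, hg⟩
  exact ⟨g', hg', fun g'' hg'' => not_lt.1 (hmin g'' hg'')⟩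

lemma IsRSTColoring.card_eq (hg : IsRSTColoring G g) :
    Fintype.card V = #(verticesInClassOfCard g 1) + #(verticesInClassOfCard g 2) +
      #(verticesInClassOfCard g 3) := by
  rw [← card_univ, card_eq_sum_card_fiberwise (f := fun v => #(colorClass g (g v)))
    (t := {1, 2, 3}) fun v _ => by
      have := card_colorClass_pos g v
      have := hg.2 (g v)
      simp
      omega]
  simp [verticesInClassOfCard]
  ring

variable [DecidableEq V] {x : V} {j : Fin k}

lemma colorClass_update_subset (c : Fin k) :
    colorClass (Function.update g x j) c ⊆ insert x (colorClass g c) := fun v hv => by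
  rcases eq_or_ne v x with rfl | hvx <;> simp_all

lemma colorClass_update_of_ne {c : Fin k} (hc : c ≠ j) :
    colorClass (Function.update g x j) c ⊆ colorClass g c := fun v hv => by
  rcases eq_or_ne v x with rfl | hvx <;> simp_all

lemma colorClass_update_of_ne_of_ne {c : Fin k} (hcx : c ≠ g x) (hcj : c ≠ j) :
    colorClass (Function.update g x j) c = colorClass g c := by
  ext v
  rcases eq_or_ne v x with rfl | hvx
  · simp [hcx.symm, hcj.symm]
  · simp [Function.update_of_ne hvx]

lemma colorClass_update_source (h : g x ≠ j) :
    colorClass (Function.update g x j) (g x) = (colorClass g (g x)).erase x := by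
  ext v
  rcases eq_or_ne v x with rfl | hvx
  · simp [h.symm]
  · simp [hvx]

lemma colorClass_update_target (h : g x ≠ j) :
    colorClass (Function.update g x j) j = insert x (colorClass g j) := by
  ext v
  rcases eq_or_ne v x with rfl | hvx
  · simp
  · simp [hvx]

lemma potential_update (h : g x ≠ j) :
    potential (Function.update g x j) + 2 * #(colorClass g (g x)) =
      potential g + 2 * (#(colorClass g j) + 1) := by
  have hsplit (F : Fin k → ℕ) :
      ∑ c, F c = F (g x) + F j + ∑ c ∈ (univ.erase (g x)).erase j, F c := by
    rw [add_assoc, add_sum_erase _ F (mem_erase.2 ⟨h.symm, mem_univ j⟩),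
      add_sum_erase _ F (mem_univ _)]
  have hrest : ∀ c ∈ (univ.erase (g x)).erase j,
      #(colorClass (Function.update g x j) c) ^ 2 = #(colorClass g c) ^ 2 := fun c hc => by
    obtain ⟨hcj, hcx, -⟩ := by simpa only [mem_erase] using hc
    rw [colorClass_update_of_ne_of_ne hcx hcj]
  obtain ⟨m, hm⟩ := Nat.exists_eq_add_of_lt (card_colorClass_pos g x)
  unfold potential
  rw [hsplit, hsplit (fun c => #(colorClass g c) ^ 2), sum_congr rfl hrest,
    colorClass_update_source h, colorClass_update_target h, card_erase_of_mem (by simp),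
    card_insert_of_notMem (by simpa using h), hm, Nat.add_sub_cancel]
  ring

lemma IsRSTColoring.update (hg : IsRSTColoring G g) (hnadj : ∀ v, g v = j → ¬ G.Adj x v)
    (hj : #(colorClass g j) < 3) : IsRSTColoring G (Function.update g x j) := by
  refine ⟨fun u v huv => ?_, fun c => ?_⟩
  · by_cases hu : u = x <;> by_cases hv : v = x
    · subst hu hv
      exact absurd huv (G.loopless.irrefl _)
    · subst hu
      rw [Function.update_self, Function.update_of_ne hv]
      exact fun h => hnadj v h.symm huv
    · subst hv
      rw [Function.update_self, Function.update_of_ne hu]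
      exact fun h => hnadj u h huv.symm
    · rw [Function.update_of_ne hu, Function.update_of_ne hv]
      exact hg.1 u v huv
  · rcases eq_or_ne c j with rfl | hcj
    · exact (card_le_card (colorClass_update_subset c)).trans
        ((card_insert_le _ _).trans (by omega))
    · exact (card_le_card (colorClass_update_of_ne hcj)).trans (hg.2 c)

lemma card_filter_le_card_filter_of_partner {p q : V → Prop} [DecidablePred p] [DecidablePred q]
    (h : ∀ a b, a ≠ b → g a = g b → #(colorClass g (g b)) = 2 → p b → q a) :
    #{b ∈ verticesInClassOfCard g 2 | p b} ≤ #{a ∈ verticesInClassOfCard g 2 | q a} := by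
  refine card_le_card_of_forall_subsingleton (fun b a => a ≠ b ∧ g a = g b)
    (fun b hb => ?_) fun a ha b₁ hb₁ b₂ hb₂ => ?_
  · obtain ⟨hb2, hpb⟩ := mem_filter.1 hb
    rw [mem_verticesInClassOfCard] at hb2
    obtain ⟨a, ha, hab⟩ := exists_mem_ne (s := colorClass g (g b)) (by omega) b
    have hga : g a = g b := mem_colorClass.1 ha
    exact ⟨a, mem_filter.2 ⟨mem_verticesInClassOfCard.2 (hga ▸ hb2), h a b hab hga hb2 hpb⟩,
      hab, hga⟩
  · have hcard : #((colorClass g (g a)).erase a) ≤ 1 := by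
      rw [card_erase_of_mem (mem_colorClass.2 rfl),
        mem_verticesInClassOfCard.1 (mem_filter.1 ha).1]
    have mem_erase_of {b : V} (hb : a ≠ b ∧ g a = g b) : b ∈ (colorClass g (g a)).erase a :=
      mem_erase.2 ⟨hb.1.symm, mem_colorClass.2 hb.2.symm⟩
    exact card_le_one.1 hcard _ (mem_erase_of hb₁.2) _ (mem_erase_of hb₂.2)

namespace IsMinRSTColoring

lemma exists_adj (hg : IsMinRSTColoring G g)
    (h : #(colorClass g j) + 2 ≤ #(colorClass g (g x))) : ∃ v, g v = j ∧ G.Adj x v := by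
  by_contra! hnadj
  have hxj : g x ≠ j := fun hxj => by rw [hxj] at h; omega
  have hle := hg.2 _ (hg.1.update hnadj (by have := hg.1.2 (g x); omega))
  have := potential_update (g := g) hxj
  omega

lemma adj_of_card_eq_three_of_card_eq_one (hg : IsMinRSTColoring G g) {u : V}
    (hx : #(colorClass g (g x)) = 3) (hu : #(colorClass g (g u)) = 1) : G.Adj x u := by
  obtain ⟨v, hv, hxv⟩ := hg.exists_adj (x := x) (j := g u) (by omega)
  rwa [eq_of_card_colorClass_eq_one hu hv] at hxv

lemma update {a w : V} (hg : IsMinRSTColoring G g) (ha : #(colorClass g (g a)) = 2)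
    (hw : #(colorClass g (g w)) = 1) (haw : ¬ G.Adj a w) :
    IsMinRSTColoring G (Function.update g a (g w)) := by
  have hne : g a ≠ g w := fun h => by rw [h] at ha; omega
  have hΦ := potential_update (g := g) hne
  refine ⟨hg.1.update (fun v hv => eq_of_card_colorClass_eq_one hw hv ▸ haw) (by omega),
    fun g' hg' => ?_⟩
  have := hg.2 g' hg'
  omega

lemma adj_of_partner {a b w : V} (hg : IsMinRSTColoring G g) (hx : #(colorClass g (g x)) = 3)
    (hab : a ≠ b) (hgab : g a = g b) (hb : #(colorClass g (g b)) = 2)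
    (hw : #(colorClass g (g w)) = 1) (haw : ¬ G.Adj a w) : G.Adj x b := by
  have ha : #(colorClass g (g a)) = 2 := hgab ▸ hb
  have hxa : g x ≠ g a := fun h => by rw [h] at hx; omega
  have hxw : g x ≠ g w := fun h => by rw [h] at hx; omega
  have hne : g a ≠ g w := fun h => by rw [h] at ha; omega
  apply (hg.update ha hw haw).adj_of_card_eq_three_of_card_eq_one
  · rw [Function.update_of_ne (by rintro rfl; exact hxa rfl),
      colorClass_update_of_ne_of_ne hxa hxw, hx]
  · rw [Function.update_of_ne hab.symm, ← hgab, colorClass_update_source hne,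
      card_erase_of_mem (mem_colorClass.2 rfl), ha]

lemma card_le_two_mul_maxDegree [DecidableRel G.Adj] {w : V} (hg : IsMinRSTColoring G g)
    (hx : #(colorClass g (g x)) = 3) (hw : #(colorClass g (g w)) = 1) :
    Fintype.card V ≤ 2 * G.maxDegree := by
  classical
  let movable (b : V) : Prop :=
    ∃ a w', a ≠ b ∧ g a = g b ∧ #(colorClass g (g w')) = 1 ∧ ¬ G.Adj a w'
  have hsplit : #{b ∈ verticesInClassOfCard g 2 | movable b} +
      #{b ∈ verticesInClassOfCard g 2 | ¬ movable b} = #(verticesInClassOfCard g 2) :=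
    card_filter_add_card_filter_not _
  have hx' : #(verticesInClassOfCard g 1) + #{b ∈ verticesInClassOfCard g 2 | movable b} ≤
      G.maxDegree := by
    refine G.card_add_card_le_maxDegree
      ((disjoint_verticesInClassOfCard (by decide)).mono_right (filter_subset _ _))
      (fun u hu => hg.adj_of_card_eq_three_of_card_eq_one hx (mem_verticesInClassOfCard.1 hu))
      fun b hb => ?_
    obtain ⟨hb, a, w', hab, hgab, hw', haw⟩ := mem_filter.1 hb
    exact hg.adj_of_partner hx hab hgab (mem_verticesInClassOfCard.1 hb) hw' haw
  have hw' : #{b ∈ verticesInClassOfCard g 2 | ¬ movable b} + #(verticesInClassOfCard g 3) ≤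
      G.maxDegree :=
    calc _ ≤ #{a ∈ verticesInClassOfCard g 2 | G.Adj w a} + #(verticesInClassOfCard g 3) :=
          Nat.add_le_add_right (card_filter_le_card_filter_of_partner fun a b hab hgab _ hb =>
            by_contra fun hwa => hb ⟨a, w, hab, hgab, hw, hwa ∘ .symm⟩) _
      _ ≤ G.maxDegree := G.card_add_card_le_maxDegree
          ((disjoint_verticesInClassOfCard (by decide)).mono_left (filter_subset _ _))
          (fun a ha => (mem_filter.1 ha).2)
          fun y hy => (hg.adj_of_card_eq_three_of_card_eq_one
            (mem_verticesInClassOfCard.1 hy) hw).symm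
  have := hg.1.card_eq
  omega

lemma card_colorClass_le_add_one [DecidableRel G.Adj] (hΔ : 2 * G.maxDegree < Fintype.card V)
    (hg : IsMinRSTColoring G g) (i j : Fin k) :
    #(colorClass g i) ≤ #(colorClass g j) + 1 := by
  by_contra! h
  obtain ⟨x, rfl⟩ : ∃ x, g x = i := by
    obtain ⟨x, hx⟩ := card_pos.1 (by omega : 0 < #(colorClass g i))
    exact ⟨x, mem_colorClass.1 hx⟩
  have hx := hg.1.2 (g x)
  obtain ⟨w, rfl, -⟩ := hg.exists_adj (x := x) (j := j) (by omega)
  have hw := card_colorClass_pos g w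
  have := hg.card_le_two_mul_maxDegree (x := x) (w := w) (by omega) (by omega)
  omega

end IsMinRSTColoring

end Recoloring

namespace IsRST

variable [Fintype V] [DecidableEq V] {G : SimpleGraph V} {P : Finset (Finset V)} {r s t : ℕ}

lemma card_eq (hP : IsRST G P r s t) : #P = r + s + t := by
  obtain ⟨-, -, hr, hs, ht, hcard⟩ := hP
  rw [card_eq_sum_card_fiberwise (f := fun A => #A) (t := {1, 2, 3})
    fun A hA => by simpa using hcard A hA]
  simp [hr, hs, ht]
  ring

lemma exists_isRSTColoring {k : ℕ} (hP : IsRST G P r s t) (hk : r + s + t ≤ k) :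
    ∃ g : V → Fin k, IsRSTColoring G g := by
  obtain ⟨ι⟩ : Nonempty (P ↪ Fin k) :=
    Function.Embedding.nonempty_of_card_le (by simpa [hP.card_eq] using hk)
  obtain ⟨hcov, hind, -, -, -, hcard⟩ := hP
  choose block hblock hmem using fun v => (hcov v).exists
  let g v := ι ⟨block v, hblock v⟩
  have mem_block {u v : V} (h : g u = g v) : u ∈ block v := by
    have : block u = block v := congrArg Subtype.val (ι.injective h)
    exact this ▸ hmem u
  refine ⟨g, fun u v huv h => hind _ (hblock v) u (mem_block h) v (hmem v) huv, fun c => ?_⟩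
  rcases (colorClass g c).eq_empty_or_nonempty with h | ⟨v, hv⟩
  · simp [h]
  · have hsub : colorClass g c ⊆ block v := fun u hu =>
      mem_block ((mem_colorClass.1 hu).trans (mem_colorClass.1 hv).symm)
    have := card_le_card hsub
    have := hcard _ (hblock v)
    omega

end IsRST

theorem stmt16_general [Fintype V] [DecidableEq V] (G : SimpleGraph V) [DecidableRel G.Adj]
    (hhigh : 2 * G.maxDegree < Fintype.card V) :
    ∀ (P : Finset (Finset V)) (r s t : ℕ), IsRST G P r s t →
      ∀ k : ℕ, r + s + t ≤ k → EqColorable G k := by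
  intro P r s t hP k hk
  obtain ⟨g₀, hg₀⟩ := hP.exists_isRSTColoring hk
  obtain ⟨g, hg⟩ := hg₀.exists_isMinRSTColoring
  exact ⟨g, hg.1.1, hg.card_colorClass_le_add_one hhigh⟩

theorem stmt16 [Fintype V] [DecidableEq V] (G : SimpleGraph V) [DecidableRel G.Adj]
    (h6 : 6 ≤ Fintype.card V)
    (hlow : Fintype.card V + 1 ≤ 3 * G.maxDegree)
    (hhigh : 2 * G.maxDegree < Fintype.card V)
    (hcomp : ∀ K : G.ConnectedComponent,
      ¬ (K.supp.ncard = G.maxDegree + 1 ∧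
         ∀ u ∈ K.supp, ∀ v ∈ K.supp, u ≠ v → G.Adj u v)) :
    ∀ (P : Finset (Finset V)) (r s t : ℕ), IsRST G P r s t →
      ∀ k : ℕ, r + s + t ≤ k → EqColorable G k :=
  stmt16_general G hhigh
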